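/- Under the weighted measure P_Θ^n on S_n, for distinct cycle lengths m₁ ≠ m₂ with m₁ + m₂ ≤ n, the mixed moment of cycle counts satisfies E_Θ[C_{m₁} C_{m₂}] = (θ_{m₁}/m₁)(θ_{m₂}/m₂) · h_{n−m₁−m₂}/h_n. -/

import Mathlib

open Nat Finset

/-- Full cycle type: cycle type together with fixed points as 1-cycles. -/
noncomputable def fullCycleType {n : ℕ} (σ : Equiv.Perm (Fin n)) : Multiset ℕ :=
  σ.cycleType + Multiset.replicate (n - σ.cycleType.sum) 1

/-- `C_m(σ)`: the number of cycles of length `m` of `σ`. -/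
noncomputable def cycleCount {n : ℕ} (σ : Equiv.Perm (Fin n)) (m : ℕ) : ℕ :=
  (fullCycleType σ).count m

/-! Summed over `Sₙ`, a function of the cycle type becomes a sum over partitions `λ ⊢ n`
weighted by the class sizes `n!/z_λ`. Since `z_{λ ∪ {m}} = m (c_m(λ) + 1) z_λ`, the weight
`m c_m(λ)/z_λ` of a partition containing the part `m` is `1/z_μ` for `μ` the partition with
one part `m` removed, whence
`∑_σ m C_m(σ) F(σ) = n(n-1)⋯(n-m+1) ∑_{ρ ∈ S_{n-m}} F(ρ ∪ {m})`.
Doing this for `m₁` and then for `m₂` (removing the part `m₁` does not change `C_{m₂}`)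
leaves the sum defining `h_{n-m₁-m₂}`. -/

namespace Multiset

/-- `z_λ = ∏ i^{c_i} c_i!`, the order of the centralizer of a permutation of cycle type `λ`. -/
def centralizerCard (M : Multiset ℕ) : ℕ := M.prod * ∏ k ∈ M.toFinset, (M.count k)!

lemma prod_factorial_count_cons (a : ℕ) (M : Multiset ℕ) :
    ∏ k ∈ (a ::ₘ M).toFinset, ((a ::ₘ M).count k)! =
      (M.count a + 1) * ∏ k ∈ M.toFinset, (M.count k)! := by
  have ha : a ∈ (a ::ₘ M).toFinset := by simp
  have hsub : M.toFinset ⊆ (a ::ₘ M).toFinset := by simp [Finset.subset_insert]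
  have hM : ∏ k ∈ M.toFinset, (M.count k)! = ∏ k ∈ (a ::ₘ M).toFinset, (M.count k)! :=
    Finset.prod_subset hsub fun k _ hk => by
      rw [count_eq_zero_of_notMem (by simpa using hk), factorial_zero]
  rw [hM, ← Finset.mul_prod_erase _ _ ha, ← Finset.mul_prod_erase _ _ ha, count_cons_self,
    factorial_succ, mul_assoc]
  congr 2
  exact Finset.prod_congr rfl fun k hk => by rw [count_cons_of_ne (Finset.ne_of_mem_erase hk)]

lemma centralizerCard_cons (a : ℕ) (M : Multiset ℕ) :
    (a ::ₘ M).centralizerCard = a * (M.count a + 1) * M.centralizerCard := by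
  rw [centralizerCard, centralizerCard, prod_cons, prod_factorial_count_cons]
  ring

lemma centralizerCard_pos {M : Multiset ℕ} (hM : 0 ∉ M) : 0 < M.centralizerCard :=
  Nat.mul_pos (Nat.pos_of_ne_zero (prod_ne_zero hM)) (Finset.prod_pos fun _ _ => factorial_pos _)

lemma centralizerCard_add_replicate_one {M : Multiset ℕ} (hM : 1 ∉ M) (r : ℕ) :
    (M + replicate r 1).centralizerCard = r ! * M.centralizerCard := by
  induction r with
  | zero => simp
  | succ r ih =>
    rw [replicate_succ, add_cons, centralizerCard_cons, ih, count_add, count_replicate_self,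
      count_eq_zero_of_notMem hM, factorial_succ]
    ring

lemma prod_map_eq_prod_pow_count_of_subset {α M : Type*} [DecidableEq α] [CommMonoid M]
    (f : α → M) (s : Multiset α) (t : Finset α) (hst : s.toFinset ⊆ t) :
    (s.map f).prod = ∏ i ∈ t, f i ^ s.count i := by
  rw [Finset.prod_multiset_map_count]
  exact Finset.prod_subset hst fun i _ hi => by
    rw [count_eq_zero_of_notMem (by simpa using hi), pow_zero]

end Multiset

namespace Nat.Partition

lemma toFinset_parts_subset_Icc {n : ℕ} (p : n.Partition) : p.parts.toFinset ⊆ Icc 1 n :=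
  fun i hi => by
    rw [Multiset.mem_toFinset] at hi
    exact Finset.mem_Icc.2 ⟨p.parts_pos hi, p.le_of_mem_parts hi⟩

lemma centralizerCard_parts_pos {n : ℕ} (p : n.Partition) : 0 < p.parts.centralizerCard :=
  Multiset.centralizerCard_pos fun h => lt_irrefl 0 (p.parts_pos h)

lemma sum_eq_sum_cons {M : Type*} [AddCommMonoid M] {n a : ℕ} (ha1 : 1 ≤ a) (ha : a ≤ n)
    (g : Multiset ℕ → M) (hg : ∀ s, a ∉ s → g s = 0) :
    ∑ p : n.Partition, g p.parts = ∑ q : (n - a).Partition, g (a ::ₘ q.parts) := by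
  rw [← Finset.sum_filter_of_ne fun p _ hp => by_contra fun ha => hp (hg _ ha),
    Finset.sum_subtype (p := fun p : n.Partition => a ∈ p.parts) _ fun p => by simp,
    ← (partitionWithPartEquiv ha1 ha).symm.sum_comp]
  simp only [partitionWithPartEquiv_symm_apply_parts]

end Nat.Partition

namespace Equiv.Perm

variable {α : Type*} [Fintype α] [DecidableEq α]

lemma card_partition_eq_mul_centralizerCard (σ : Perm α) :
    #{τ : Perm α | τ.partition = σ.partition} * σ.partition.parts.centralizerCard =
      (Fintype.card α)! := by
  have h1 : 1 ∉ σ.cycleType := fun h => by simpa using one_lt_of_mem_cycleType h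
  rw [parts_partition, Multiset.centralizerCard_add_replicate_one h1, ← sum_cycleType,
    ← card_isConj_mul_eq σ, Multiset.centralizerCard, Nat.card_eq_fintype_card,
    ← Fintype.card_subtype, ← mul_assoc (_ !)]
  congr 1
  refine Fintype.card_congr (Equiv.subtypeEquivRight fun τ => ?_)
  rw [Set.mem_ofPred_eq, partition_eq_of_isConj, eq_comm]

lemma exists_partition_eq (p : (Fintype.card α).Partition) :
    ∃ σ : Perm α, σ.partition = p := by
  have hones : p.parts.filter (¬ 2 ≤ ·) =
      Multiset.replicate (Multiset.card (p.parts.filter (¬ 2 ≤ ·))) 1 :=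
    Multiset.eq_replicate_card.2 fun b hb => by
      obtain ⟨hbp, hb2⟩ := Multiset.mem_filter.1 hb
      have := p.parts_pos hbp
      omega
  have hsum : (p.parts.filter (2 ≤ ·)).sum + Multiset.card (p.parts.filter (¬ 2 ≤ ·)) =
      Fintype.card α := by
    conv_rhs => rw [← p.parts_sum, ← Multiset.filter_add_not (2 ≤ ·) p.parts,
      Multiset.sum_add, hones, Multiset.sum_replicate, smul_eq_mul, mul_one]
  obtain ⟨σ, hσ⟩ := (exists_with_cycleType_iff α (m := p.parts.filter (2 ≤ ·))).2
    ⟨by omega, fun a ha => (Multiset.mem_filter.1 ha).2⟩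
  refine ⟨σ, Nat.Partition.ext ?_⟩
  rw [parts_partition, ← sum_cycleType, hσ,
    show Fintype.card α - _ = Multiset.card (p.parts.filter (¬ 2 ≤ ·)) by omega, ← hones,
    Multiset.filter_add_not]

variable {K : Type*} [Field K] [CharZero K]

lemma sum_eq_sum_partition (F : Multiset ℕ → K) {k : ℕ} (hk : Fintype.card α = k) :
    ∑ σ : Perm α, F σ.partition.parts =
      ∑ p : k.Partition, (k ! / p.parts.centralizerCard : K) * F p.parts := by
  subst hk
  rw [← Finset.sum_fiberwise Finset.univ partition]
  refine Finset.sum_congr rfl fun p _ => ?_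
  obtain ⟨σ, rfl⟩ := exists_partition_eq p
  rw [Finset.sum_congr rfl fun τ hτ => by rw [(Finset.mem_filter.1 hτ).2], Finset.sum_const,
    nsmul_eq_mul]
  congr 1
  rw [eq_div_iff, ← Nat.cast_mul, card_partition_eq_mul_centralizerCard]
  exact Nat.cast_ne_zero.2 σ.partition.centralizerCard_parts_pos.ne'

theorem sum_mul_count_eq_descFactorial_mul_sum {β : Type*} [Fintype β] [DecidableEq β]
    (F : Multiset ℕ → K) {m : ℕ} (hm : 1 ≤ m) (hmα : m ≤ Fintype.card α)
    (hβ : Fintype.card β = Fintype.card α - m) :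
    ∑ σ : Perm α, (m * σ.partition.parts.count m : K) * F σ.partition.parts =
      (Fintype.card α).descFactorial m * ∑ ρ : Perm β, F (m ::ₘ ρ.partition.parts) := by
  rw [sum_eq_sum_partition (fun M => (m * M.count m : K) * F M) rfl,
    sum_eq_sum_partition (fun M => F (m ::ₘ M)) hβ,
    Nat.Partition.sum_eq_sum_cons hm hmα
      (fun M => ((Fintype.card α)! / M.centralizerCard : K) * (m * M.count m * F M)),
    Finset.mul_sum]
  · refine Finset.sum_congr rfl fun q _ => ?_
    have hq : (q.parts.centralizerCard : K) ≠ 0 :=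
      Nat.cast_ne_zero.2 q.centralizerCard_parts_pos.ne'
    have hm0 : (m : K) ≠ 0 := Nat.cast_ne_zero.2 (by omega)
    rw [Multiset.centralizerCard_cons, Multiset.count_cons_self,
      ← Nat.factorial_mul_descFactorial hmα]
    push_cast
    field_simp
  · intro s hs
    simp [Multiset.count_eq_zero_of_notMem hs]

theorem sum_prod_map_mul_count_mul {β : Type*} [Fintype β] [DecidableEq β] (θ : ℕ → K)
    (G : Multiset ℕ → K) {m : ℕ} (hm : 1 ≤ m) (hmα : m ≤ Fintype.card α)
    (hβ : Fintype.card β = Fintype.card α - m) :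
    ∑ σ : Perm α, (σ.partition.parts.map θ).prod * σ.partition.parts.count m *
        G σ.partition.parts =
      (Fintype.card α).descFactorial m * (θ m / m) *
        ∑ ρ : Perm β, (ρ.partition.parts.map θ).prod * G (m ::ₘ ρ.partition.parts) := by
  have hm0 : (m : K) ≠ 0 := Nat.cast_ne_zero.2 (by omega)
  have key := sum_mul_count_eq_descFactorial_mul_sum (fun M => (M.map θ).prod * G M) hm hmα hβ
  simp only [Multiset.map_cons, Multiset.prod_cons, mul_assoc (θ m), ← Finset.mul_sum] at key
  apply mul_left_cancel₀ hm0
  calc (m : K) * ∑ σ : Perm α, (σ.partition.parts.map θ).prod * σ.partition.parts.count m *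
        G σ.partition.parts
      = ∑ σ : Perm α, (m * σ.partition.parts.count m : K) *
          ((σ.partition.parts.map θ).prod * G σ.partition.parts) := by
        rw [Finset.mul_sum]
        exact Finset.sum_congr rfl fun σ _ => by ring
    _ = _ := by
        rw [key]
        field_simp

end Equiv.Perm

lemma fullCycleType_eq_parts_partition {n : ℕ} (σ : Equiv.Perm (Fin n)) :
    fullCycleType σ = σ.partition.parts := by
  rw [fullCycleType, Equiv.Perm.parts_partition, Equiv.Perm.sum_cycleType, Fintype.card_fin]

lemma cycleCount_eq_count_parts {n : ℕ} (σ : Equiv.Perm (Fin n)) (m : ℕ) :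
    cycleCount σ m = σ.partition.parts.count m := by
  rw [cycleCount, fullCycleType_eq_parts_partition]

lemma prod_pow_cycleCount {M : Type*} [CommMonoid M] (θ : ℕ → M) {n : ℕ}
    (σ : Equiv.Perm (Fin n)) :
    ∏ i ∈ Icc 1 n, θ i ^ cycleCount σ i = (σ.partition.parts.map θ).prod := by
  have hsub := σ.partition.toFinset_parts_subset_Icc
  simp only [Fintype.card_fin] at hsub
  simp only [cycleCount_eq_count_parts]
  exact (Multiset.prod_map_eq_prod_pow_count_of_subset θ _ _ hsub).symm

theorem mixed_moment_cycleCount_general (θ : ℕ → ℝ) (h : ℕ → ℝ)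
    (hh : ∀ j, h j = ((j ! : ℝ))⁻¹ *
      ∑ σ : Equiv.Perm (Fin j), ∏ i ∈ Finset.Icc 1 j, θ i ^ cycleCount σ i)
    (n m₁ m₂ : ℕ) (hm₁ : 1 ≤ m₁) (hm₂ : 1 ≤ m₂) (hne : m₁ ≠ m₂)
    (hsum : m₁ + m₂ ≤ n) :
    (1 / (h n * (n ! : ℝ))) *
        ∑ σ : Equiv.Perm (Fin n),
          (∏ i ∈ Finset.Icc 1 n, θ i ^ cycleCount σ i) *
            ((cycleCount σ m₁ : ℝ) * (cycleCount σ m₂ : ℝ))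
      = (θ m₁ / m₁) * (θ m₂ / m₂) * h (n - m₁ - m₂) / h n := by
  have peel₁ := Equiv.Perm.sum_prod_map_mul_count_mul (α := Fin n) (β := Fin (n - m₁)) θ
    (fun M => (M.count m₂ : ℝ)) hm₁ (by simp; omega) (by simp)
  have peel₂ := Equiv.Perm.sum_prod_map_mul_count_mul (α := Fin (n - m₁))
    (β := Fin (n - m₁ - m₂)) θ (fun _ => 1) hm₂ (by simp; omega) (by simp)
  simp only [Multiset.count_cons_of_ne hne.symm, Fintype.card_fin, mul_one] at peel₁ peel₂
  have hrest := hh (n - m₁ - m₂)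
  simp only [prod_pow_cycleCount] at hrest ⊢
  simp only [cycleCount_eq_count_parts, ← mul_assoc]
  rw [peel₁, peel₂, hrest, ← factorial_mul_descFactorial (show m₁ ≤ n by omega),
    ← factorial_mul_descFactorial (show m₂ ≤ n - m₁ by omega)]
  have hf : ((n - m₁ - m₂)! : ℝ) ≠ 0 := by positivity
  have hd₁ : (n.descFactorial m₁ : ℝ) ≠ 0 :=
    Nat.cast_ne_zero.2 (descFactorial_pos.2 (by omega)).ne'
  have hd₂ : ((n - m₁).descFactorial m₂ : ℝ) ≠ 0 :=
    Nat.cast_ne_zero.2 (descFactorial_pos.2 (by omega)).ne'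
  push_cast
  field_simp

/-- Mixed moment of cycle counts under the weighted measure `P_Θ^n`: for
`m₁ ≠ m₂` with `m₁ + m₂ ≤ n`,
`E_Θ[C_{m₁} C_{m₂}] = (θ_{m₁}/m₁)(θ_{m₂}/m₂) h_{n-m₁-m₂}/h_n`. -/
theorem mixed_moment_cycleCount (θ : ℕ → ℝ) (hθ : ∀ m, 0 ≤ θ m) (h : ℕ → ℝ)
    (hh : ∀ j, h j = ((j ! : ℝ))⁻¹ *
      ∑ σ : Equiv.Perm (Fin j), ∏ i ∈ Finset.Icc 1 j, θ i ^ cycleCount σ i)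
    (n m₁ m₂ : ℕ) (hm₁ : 1 ≤ m₁) (hm₂ : 1 ≤ m₂) (hne : m₁ ≠ m₂)
    (hsum : m₁ + m₂ ≤ n) (hn : h n ≠ 0) :
    (1 / (h n * (n ! : ℝ))) *
        ∑ σ : Equiv.Perm (Fin n),
          (∏ i ∈ Finset.Icc 1 n, θ i ^ cycleCount σ i) *
            ((cycleCount σ m₁ : ℝ) * (cycleCount σ m₂ : ℝ))
      = (θ m₁ / m₁) * (θ m₂ / m₂) * h (n - m₁ - m₂) / h n :=
  mixed_moment_cycleCount_general θ h hh n m₁ m₂ hm₁ hm₂ hne hsum
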